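/- arXiv:1709.03479 — 4 statements merged into one kernel-verified Lean document; each statement's English description precedes it below -/
import Mathlib

section
/- Let n ≥ 2, let c' be a coloring of n strands, let 1 ≤ k ≤ n−1, and set c = s_k c'. Define the row vector v of length n−1 over Λ_μ by v = 0 if k ≤ n−2, and v = (0,…,0,1) (with 1 in the last position) if k = n−1, and let M = [[G_k(c'),0],[v,1]] be the associated n×n matrix. Then for every column index j with 1 ≤ j ≤ n, ∑_{i=1}^{n} (T^{c'}_i − 1)·M_{i,j} = T^{c}_j − 1; equivalently, the row vector d_{c'} = (T^{c'}_1 − 1, …, T^{c'}_n − 1) satisfies d_{c'}·M = d_c. (This expresses, at the matrix level, that the homology connecting homomorphism ∂ satisfies ∂ ∘ B_{(c,c')}(σ_k) = ∂ for the unreduced colored Gassner matrix of the braid generator σ_k viewed as a (c,c')-braid.) -/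
noncomputable section

open scoped BigOperators

/-- The multivariable Laurent polynomial ring `Λ_μ = ℤ[t₁^{±1},…,t_μ^{±1}]`,
realized as the group ℤ-algebra of `ℤ^μ`. -/
abbrev Lau (μ : ℕ) : Type := AddMonoidAlgebra ℤ (Fin μ →₀ ℤ)

instance (μ : ℕ) : IsDomain (Lau μ) := NoZeroDivisors.to_isDomain _

/-- The distinguished unit `t_i` of `Λ_μ`. -/
def tU {μ : ℕ} (i : Fin μ) : (Lau μ)ˣ where
  val := AddMonoidAlgebra.single (Finsupp.single i 1) 1
  inv := AddMonoidAlgebra.single (Finsupp.single i (-1)) 1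
  val_inv := by
    rw [AddMonoidAlgebra.single_mul_single, ← Finsupp.single_add]
    norm_num; rfl
  inv_val := by
    rw [AddMonoidAlgebra.single_mul_single, ← Finsupp.single_add]
    norm_num; rfl

/-- `T^c_i = t_{c_1} ⋯ t_{c_i}` (product of the first `i` values of the coloring,
zero-indexed: product over indices `k ≤ i`), as a unit of `Λ_μ`. -/
def TU {μ n : ℕ} (c : Fin n → Fin μ) (i : Fin n) : (Lau μ)ˣ :=
  ∏ k ∈ Finset.Iic i, tU (c k)

/-- The `n×n` matrix `[[A,0],[v,1]]` built from an `(n−1)×(n−1)` matrix `A`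
and a row vector `v` of length `n−1` (here `n = l+2`): the upper-left block is `A`,
the last column is `(0,…,0,1)ᵀ` and the last row begins with `v`. -/
def aug {μ l : ℕ} (A : Matrix (Fin (l+1)) (Fin (l+1)) (Lau μ)) (v : Fin (l+1) → Lau μ) :
    Matrix (Fin (l+2)) (Fin (l+2)) (Lau μ) := fun i j =>
  if hi : (i : ℕ) < l + 1 then
    if hj : (j : ℕ) < l + 1 then A ⟨i, hi⟩ ⟨j, hj⟩ else 0
  else
    if hj : (j : ℕ) < l + 1 then v ⟨j, hj⟩ else 1

/-- The pair `(A, v)` satisfies the boundary relation for the coloring `c`: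
for every column `j`, `∑_{i=1}^{n−1} (T^c_i − 1)(A − I)_{ij} = −(T^c_n − 1) v_j`. -/
def BoundaryRel {μ l : ℕ} (c : Fin (l+2) → Fin μ) (A : Matrix (Fin (l+1)) (Fin (l+1)) (Lau μ))
    (v : Fin (l+1) → Lau μ) : Prop :=
  ∀ j : Fin (l+1), ∑ i : Fin (l+1),
      ((TU c i.castSucc : Lau μ) - 1) * (A - 1) i j
    = -((TU c (Fin.last (l+1)) : Lau μ) - 1) * v j

/-- The swap `s_k c` of a coloring: exchange the `k`-th and `(k+1)`-st values
(zero-indexed: the values at positions `k.castSucc` and `k.succ`). -/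
def swapC {μ n : ℕ} (c : Fin (n+1) → Fin μ) (k : Fin n) : Fin (n+1) → Fin μ :=
  c ∘ Equiv.swap k.castSucc k.succ

/-- The reduced colored Gassner generator matrix `G_k(c')`: the identity matrix of
size `n` (`= number of strands − 1`) except in its `k`-th column, where the entry
`(k−1,k)` is `t_{c'_{k+1}}`, the entry `(k,k)` is `−t_{c'_{k+1}}` and the entry
`(k+1,k)` is `1` (all zero-indexed, so `c'_{k+1}` is `c' k.succ`). -/
def Ggen {μ n : ℕ} (c' : Fin (n+1) → Fin μ) (k : Fin n) : Matrix (Fin n) (Fin n) (Lau μ) :=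
  fun i j =>
    if j = k then
      if i = k then -(tU (c' k.succ) : Lau μ)
      else if (i : ℕ) + 1 = (k : ℕ) then (tU (c' k.succ) : Lau μ)
      else if (i : ℕ) = (k : ℕ) + 1 then 1
      else 0
    else if i = j then 1 else 0

lemma TU_eq {μ n : ℕ} (c : Fin n → Fin μ) (m : Fin n) :
    TU c m = tU (c m) * ∏ p ∈ Finset.Iio m, tU (c p) := by
  rw [TU, ← Finset.Iio_insert, Finset.prod_insert (by simp)]

lemma sum_if_fin {μ l : ℕ} (f : Fin (l+2) → Lau μ) (p : Fin (l+2)) (x : Lau μ) :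
    ∑ i : Fin (l+2), f i * (if i = p then x else 0) = f p * x := by
  rw [Finset.sum_eq_single p]
  · rw [if_pos rfl]
  · intro i _ hi; rw [if_neg hi, mul_zero]
  · simp

lemma augM_off {μ l : ℕ} (c' : Fin (l+2) → Fin μ) (k : Fin (l+1)) (j : Fin (l+2))
    (hjk : (j : ℕ) ≠ (k : ℕ)) (i : Fin (l+2)) :
    aug (Ggen c' k) (fun p => if (k : ℕ) = l ∧ (p : ℕ) = l then 1 else 0) i j =
      if i = j then 1 else 0 := by
  have hk2 : (k : ℕ) < l + 1 := k.isLt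
  have hi2 : (i : ℕ) < l + 2 := i.isLt
  have e1 : ((k.castSucc : Fin (l+2)) : ℕ) = (k : ℕ) := rfl
  have e2 : ((Fin.succ k : Fin (l+2)) : ℕ) = (k : ℕ) + 1 := rfl
  have hj2 : (j : ℕ) < l + 2 := j.isLt
  simp only [aug, Ggen]
  split_ifs <;>
    first
      | rfl
      | (exfalso;
         simp only [Fin.ext_iff, Fin.coe_castSucc, Fin.val_succ, Fin.val_mk,
           not_and, not_lt, not_true, not_false_iff] at *;
         all_goals first | omega | assumption | exact absurd rfl (by assumption))

lemma augM_col0 {μ l : ℕ} (c' : Fin (l+2) → Fin μ) (k : Fin (l+1)) (hk0 : (k : ℕ) = 0)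
    (i : Fin (l+2)) :
    aug (Ggen c' k) (fun p => if (k : ℕ) = l ∧ (p : ℕ) = l then 1 else 0) i k.castSucc =
      (if i = k.castSucc then (-(tU (c' k.succ) : Lau μ)) else 0)
      + (if i = k.succ then (1 : Lau μ) else 0) := by
  have hk2 : (k : ℕ) < l + 1 := k.isLt
  have hi2 : (i : ℕ) < l + 2 := i.isLt
  have e1 : ((k.castSucc : Fin (l+2)) : ℕ) = (k : ℕ) := rfl
  have e2 : ((Fin.succ k : Fin (l+2)) : ℕ) = (k : ℕ) + 1 := rfl
  simp only [aug, Ggen]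
  split_ifs <;>
    first
      | rfl
      | ring1
      | (exfalso;
         simp only [Fin.ext_iff, Fin.coe_castSucc, Fin.val_succ, Fin.val_mk,
           not_and, not_lt, not_true, not_false_iff] at *;
         all_goals first | omega | assumption | exact absurd rfl (by assumption))

lemma augM_colk {μ l : ℕ} (c' : Fin (l+2) → Fin μ) (k : Fin (l+1)) (hk1 : 1 ≤ (k : ℕ))
    (i : Fin (l+2)) :
    aug (Ggen c' k) (fun p => if (k : ℕ) = l ∧ (p : ℕ) = l then 1 else 0) i k.castSucc =
      (if i = (⟨(k : ℕ) - 1, by omega⟩ : Fin (l+2)) then (tU (c' k.succ) : Lau μ) else 0)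
      + ((if i = k.castSucc then (-(tU (c' k.succ) : Lau μ)) else 0)
      + (if i = k.succ then (1 : Lau μ) else 0)) := by
  have hk2 : (k : ℕ) < l + 1 := k.isLt
  have hi2 : (i : ℕ) < l + 2 := i.isLt
  have e1 : ((k.castSucc : Fin (l+2)) : ℕ) = (k : ℕ) := rfl
  have e2 : ((Fin.succ k : Fin (l+2)) : ℕ) = (k : ℕ) + 1 := rfl
  simp only [aug, Ggen]
  split_ifs <;>
    first
      | rfl
      | ring1
      | (exfalso;
         simp only [Fin.ext_iff, Fin.coe_castSucc, Fin.val_succ, Fin.val_mk,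
           not_and, not_lt, not_true, not_false_iff] at *;
         all_goals first | omega | assumption | exact absurd rfl (by assumption))

/-- for the braid generator `σ_k` viewed as a `(c,c')`-braid with
`c = s_k c'`, the unreduced matrix `M = [[G_k(c'),0],[v,1]]` (where `v = 0` unless
`k = n−1`, in which case `v = (0,…,0,1)`) satisfies `d_{c'} · M = d_c` for the
rows of partial products `d_c = (T^c_1 − 1, …, T^c_n − 1)` (here `n = l + 2 ≥ 2`,
and `k` ranges over `Fin (l+1)`, i.e. `1 ≤ k ≤ n − 1` one-indexed). -/
theorem stmt1 {μ l : ℕ} (c' : Fin (l+2) → Fin μ) (k : Fin (l+1)) :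
    ∀ j : Fin (l+2), ∑ i : Fin (l+2),
        ((TU c' i : Lau μ) - 1) *
          aug (Ggen c' k) (fun p => if (k : ℕ) = l ∧ (p : ℕ) = l then 1 else 0) i j
      = (TU (swapC c' k) j : Lau μ) - 1 := by
  have hk2 : (k : ℕ) < l + 1 := k.isLt
  intro j
  by_cases hjk : (j : ℕ) = (k : ℕ)
  · -- column k
    have hj : j = k.castSucc := Fin.ext (by simpa using hjk)
    subst hj
    set b : (Lau μ)ˣ := tU (c' k.succ) with hb
    set Q : (Lau μ)ˣ := ∏ p ∈ Finset.Iio (k.castSucc : Fin (l+2)), tU (c' p) with hQ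
    have hQA : TU c' k.castSucc = tU (c' k.castSucc) * Q := TU_eq c' k.castSucc
    have hsetB : Finset.Iio (Fin.succ k : Fin (l+2)) = Finset.Iic (k.castSucc : Fin (l+2)) := by
      ext m
      simp only [Finset.mem_Iio, Finset.mem_Iic, Fin.lt_def, Fin.le_def, Fin.coe_castSucc,
        Fin.val_succ]
      omega
    have hQB : TU c' k.succ = b * TU c' k.castSucc := by
      rw [TU_eq c' k.succ, hsetB, hb]
      rfl
    have hQC : TU (swapC c' k) k.castSucc = b * Q := by
      rw [TU_eq, hQ, hb]
      congr 1
      · simp [swapC]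
      · apply Finset.prod_congr rfl
        intro m hm
        simp only [Finset.mem_Iio, Fin.lt_def, Fin.coe_castSucc] at hm
        have h1 : m ≠ k.castSucc := Fin.ne_of_val_ne (by simp only [Fin.coe_castSucc]; omega)
        have h2 : m ≠ (Fin.succ k : Fin (l+2)) :=
          Fin.ne_of_val_ne (by simp only [Fin.val_succ]; omega)
        simp [swapC, Equiv.swap_apply_of_ne_of_ne h1 h2]
    by_cases hk0 : (k : ℕ) = 0
    · -- k = 0 : no row k-1
      have hQ1 : Q = 1 := by
        rw [hQ, Finset.prod_eq_one]
        intro m hm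
        exfalso
        simp only [Finset.mem_Iio, Fin.lt_def, Fin.coe_castSucc, hk0] at hm
        omega
      simp only [augM_col0 c' k hk0, mul_add, Finset.sum_add_distrib, sum_if_fin]
      rw [hQC, hQB, hQA, hQ1]
      simp only [Units.val_mul, Units.val_one]
      ring
    · -- k ≥ 1
      have hk1 : 1 ≤ (k : ℕ) := by omega
      have hsetD : Finset.Iic (⟨(k : ℕ) - 1, by omega⟩ : Fin (l+2))
          = Finset.Iio (k.castSucc : Fin (l+2)) := by
        ext m
        simp only [Finset.mem_Iic, Finset.mem_Iio, Fin.le_def, Fin.lt_def, Fin.coe_castSucc,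
          Fin.val_mk]
        omega
      have hQD : TU c' (⟨(k : ℕ) - 1, by omega⟩ : Fin (l+2)) = Q := by
        rw [TU, hsetD, hQ]
      simp only [augM_colk c' k hk1, mul_add, Finset.sum_add_distrib, sum_if_fin]
      rw [hQC, hQB, hQA, hQD]
      simp only [Units.val_mul]
      ring
  · -- other columns: identity column
    simp only [augM_off c' k j hjk, sum_if_fin, mul_one]
    congr 2
    rw [TU, TU]
    apply Finset.prod_equiv (Equiv.swap (k.castSucc : Fin (l+2)) (Fin.succ k))
    · intro m
      rcases eq_or_ne m k.castSucc with h | h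
      · subst h
        simp only [Equiv.swap_apply_left, Finset.mem_Iic, Fin.le_def, Fin.coe_castSucc,
          Fin.val_succ]
        omega
      rcases eq_or_ne m (Fin.succ k : Fin (l+2)) with h2 | h2
      · subst h2
        simp only [Equiv.swap_apply_right, Finset.mem_Iic, Fin.le_def, Fin.coe_castSucc,
          Fin.val_succ]
        omega
      · rw [Equiv.swap_apply_of_ne_of_ne h h2]
    · intro m _
      simp [swapC]
end
end

section
/- Let n ≥ 3, let c be a coloring of n strands, and let 1 ≤ i ≤ n−2. Then the reduced colored Gassner generator matrices satisfy the colored braid relation: G_i(s_i s_{i+1} s_i c) · G_{i+1}(s_{i+1} s_i c) · G_i(s_i c) = G_{i+1}(s_{i+1} s_i s_{i+1} c) · G_i(s_i s_{i+1} c) · G_{i+1}(s_{i+1} c) as (n−1)×(n−1) matrices over Λ_μ (note that s_i s_{i+1} s_i c = s_{i+1} s_i s_{i+1} c). This is the matrix identity expressing that the assignment β ↦ reduced colored Gassner matrix, which is anti-multiplicative (B̄(βγ) = B̄(γ)·B̄(β)), is compatible with the braid relation σ_i σ_{i+1} σ_i = σ_{i+1} σ_i σ_{i+1} of colored braids. 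-/
noncomputable section

open scoped BigOperators

/-- Column vector of the rank-one part of a Gassner generator. -/
def uv {μ m : ℕ} (t : Lau μ) (k : Fin m) : Fin m → Lau μ := fun j =>
  if j = k then -t - 1
  else if (j : ℕ) + 1 = (k : ℕ) then t
  else if (j : ℕ) = (k : ℕ) + 1 then 1
  else 0

/-- The standard basis row vector. -/
def wv {μ m : ℕ} (k : Fin m) : Fin m → Lau μ := fun j => if j = k then 1 else 0

lemma V_mul_V {μ m : ℕ} (a b : Fin m → Lau μ) (k k' : Fin m) :
    Matrix.vecMulVec a (wv k) * Matrix.vecMulVec b (wv k')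
      = b k • Matrix.vecMulVec a (wv k') := by
  ext i j
  simp [Matrix.mul_apply, Matrix.vecMulVec_apply, wv, mul_ite, ite_mul,
    Finset.sum_ite_eq, mul_comm, mul_assoc, mul_left_comm]

set_option maxHeartbeats 2000000 in
lemma braid {μ m : ℕ} (x y : Lau μ) (k k' : Fin m) (hk : (k : ℕ) + 1 = (k' : ℕ)) :
    (1 + Matrix.vecMulVec (uv y k) (wv k)) * (1 + Matrix.vecMulVec (uv x k') (wv k'))
        * (1 + Matrix.vecMulVec (uv x k) (wv k))
      = (1 + Matrix.vecMulVec (uv x k') (wv k')) * (1 + Matrix.vecMulVec (uv x k) (wv k))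
        * (1 + Matrix.vecMulVec (uv y k') (wv k')) := by
  have hne : k' ≠ k := by simp [Fin.ext_iff]; omega
  have e1 : uv (μ := μ) x k' k = x := by
    simp only [uv]
    rw [if_neg (fun hh => hne hh.symm), if_pos hk]
  have e2 : uv (μ := μ) x k k = -x - 1 := by simp [uv]
  have e3 : uv (μ := μ) y k k = -y - 1 := by simp [uv]
  have e4 : uv (μ := μ) x k k' = 1 := by
    simp only [uv]
    rw [if_neg hne, if_neg (by omega), if_pos (by omega)]
  have e5 : uv (μ := μ) y k' k' = -y - 1 := by simp [uv]
  have e6 : uv (μ := μ) y k' k = y := by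
    simp only [uv]
    rw [if_neg (fun hh => hne hh.symm), if_pos hk]
  simp only [mul_add, add_mul, one_mul, mul_one]
  simp only [V_mul_V, smul_mul_assoc, Matrix.smul_mul]
  simp only [V_mul_V, smul_smul, e1, e2, e3, e4, e5, e6]
  ext i j
  simp only [Matrix.add_apply, Matrix.smul_apply, Matrix.vecMulVec_apply, Matrix.one_apply,
    uv, wv, smul_eq_mul, Fin.ext_iff]
  split_ifs <;> first | omega | ring

lemma Ggen_eq {μ n : ℕ} (c' : Fin (n+1) → Fin μ) (k : Fin n) :
    Ggen c' k = 1 + Matrix.vecMulVec (uv ((tU (c' k.succ) : Lau μ)) k) (wv k) := by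
  ext i j
  simp only [Ggen, Matrix.add_apply, Matrix.one_apply, Matrix.vecMulVec_apply, uv, wv,
    Fin.ext_iff]
  split_ifs <;> first | omega | ring

lemma swapC_apply {μ n : ℕ} (c : Fin (n+1) → Fin μ) (k : Fin n) (j : Fin (n+1)) :
    swapC c k j = if (j : ℕ) = (k : ℕ) then c k.succ
      else if (j : ℕ) = (k : ℕ) + 1 then c k.castSucc else c j := by
  simp only [swapC, Function.comp_apply, Equiv.swap_apply_def, Fin.ext_iff,
    Fin.coe_castSucc, Fin.val_succ]
  split_ifs <;> first | omega | rfl | (congr 1; exact Fin.ext (by omega))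

/-- the colored braid relation for the reduced colored Gassner
generator matrices:
`G_i(s_i s_{i+1} s_i c) · G_{i+1}(s_{i+1} s_i c) · G_i(s_i c)
  = G_{i+1}(s_{i+1} s_i s_{i+1} c) · G_i(s_i s_{i+1} c) · G_{i+1}(s_{i+1} c)`.
Here the matrices have size `m = n − 1` with `n ≥ 3`, and `i` (zero-indexed, with
`i + 1 < m`) corresponds to `1 ≤ i ≤ n − 2` one-indexed. -/
theorem stmt2 {μ m : ℕ} (hm : 2 ≤ m) (c : Fin (m+1) → Fin μ) (i : Fin m)
    (h : (i : ℕ) + 1 < m) :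
    Ggen (swapC (swapC (swapC c i) ⟨(i : ℕ) + 1, h⟩) i) i *
        Ggen (swapC (swapC c i) ⟨(i : ℕ) + 1, h⟩) ⟨(i : ℕ) + 1, h⟩ *
        Ggen (swapC c i) i
      = Ggen (swapC (swapC (swapC c ⟨(i : ℕ) + 1, h⟩) i) ⟨(i : ℕ) + 1, h⟩) ⟨(i : ℕ) + 1, h⟩ *
        Ggen (swapC (swapC c ⟨(i : ℕ) + 1, h⟩) i) i *
        Ggen (swapC c ⟨(i : ℕ) + 1, h⟩) ⟨(i : ℕ) + 1, h⟩ := by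
  set k' : Fin m := ⟨(i : ℕ) + 1, h⟩ with hk'
  have hvk' : (k' : ℕ) = (i : ℕ) + 1 := rfl
  have hsk' : ((k'.succ : Fin (m+1)) : ℕ) = (i : ℕ) + 2 := by simp [hk']
  have hsi : ((i.succ : Fin (m+1)) : ℕ) = (i : ℕ) + 1 := by simp
  have hci : ((i.castSucc : Fin (m+1)) : ℕ) = (i : ℕ) := by simp
  have c1 : swapC (swapC (swapC c i) k') i i.succ = c i.succ := by
    simp only [swapC_apply, Fin.coe_castSucc, Fin.val_succ, hvk']
    split_ifs <;> first | omega | rfl |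
      (congr 1; apply Fin.ext; simp only [Fin.coe_castSucc, Fin.val_succ, hvk']; omega)
  have c2 : swapC (swapC c i) k' k'.succ = c i.castSucc := by
    simp only [swapC_apply, Fin.coe_castSucc, Fin.val_succ, hvk']
    split_ifs <;> first | omega | rfl |
      (congr 1; apply Fin.ext; simp only [Fin.coe_castSucc, Fin.val_succ, hvk']; omega)
  have c3 : swapC c i i.succ = c i.castSucc := by
    simp only [swapC_apply, Fin.coe_castSucc, Fin.val_succ, hvk']
    split_ifs <;> first | omega | rfl |
      (congr 1; apply Fin.ext; simp only [Fin.coe_castSucc, Fin.val_succ, hvk']; omega)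
  have c4 : swapC (swapC (swapC c k') i) k' k'.succ = c i.castSucc := by
    simp only [swapC_apply, Fin.coe_castSucc, Fin.val_succ, hvk']
    split_ifs <;> first | omega | rfl |
      (congr 1; apply Fin.ext; simp only [Fin.coe_castSucc, Fin.val_succ, hvk']; omega)
  have c5 : swapC (swapC c k') i i.succ = c i.castSucc := by
    simp only [swapC_apply, Fin.coe_castSucc, Fin.val_succ, hvk']
    split_ifs <;> first | omega | rfl |
      (congr 1; apply Fin.ext; simp only [Fin.coe_castSucc, Fin.val_succ, hvk']; omega)
  have c6 : swapC c k' k'.succ = c i.succ := by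
    simp only [swapC_apply, Fin.coe_castSucc, Fin.val_succ, hvk']
    split_ifs <;> first | omega | rfl |
      (congr 1; apply Fin.ext; simp only [Fin.coe_castSucc, Fin.val_succ, hvk']; omega)
  rw [Ggen_eq, Ggen_eq, Ggen_eq, Ggen_eq, Ggen_eq, Ggen_eq, c1, c2, c3, c4, c5, c6]
  exact braid (tU (c i.castSucc) : Lau μ) (tU (c i.succ) : Lau μ) i k' rfl
end
end

section
/- Let n ≥ 2, let c be a coloring of n strands and set t = t_{c_n}. Suppose A is an (n−1)×(n−1) matrix over Λ_μ and v is a row vector of length n−1 over Λ_μ such that (A, v) satisfies the boundary relation for c. Let M = [[A,0],[v,1]] and let G be the n×n matrix equal to the identity except in its last 2×2 diagonal block, which equals [[1, t],[0, −t]] (G is the reduced colored Gassner matrix of the stabilizing generator σ_n for the coloring (c_1,…,c_n,c_n) of n+1 strands). Then (T^c_n − 1) · det(M·G − I_n) = (1 − T^c_{n−1}·t²) · det(A − I_{n−1}). (This is the determinant identity establishing invariance of the paper's invariant f under the positive second colored Markov move.) -/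
/-!
Put `N = M·G − I` and weight its rows by `x_i = T^c_i − 1`. The upper-left block of `N` is
`A − I`, and by the boundary relation the combination `x·N` vanishes in every column but the
last, where (using `T^c_n = T^c_{n−1} t`) it equals `1 − T^c_{n−1} t²`. Replacing the last row
of `N` by `x·N` multiplies the determinant by `x_n = T^c_n − 1`, and expanding along that row
gives `(1 − T^c_{n−1} t²) · det(A − I)`.
-/

noncomputable section

open scoped BigOperators

/-- The `(l+2)×(l+2)` matrix equal to the identity except in its last `2×2`
diagonal block, which is `[[a,b],[c,d]]`. -/
def last2Block {μ : ℕ} (l : ℕ) (a b c d : Lau μ) :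
    Matrix (Fin (l+2)) (Fin (l+2)) (Lau μ) := fun i j =>
  if (i : ℕ) = l ∧ (j : ℕ) = l then a
  else if (i : ℕ) = l ∧ (j : ℕ) = l + 1 then b
  else if (i : ℕ) = l + 1 ∧ (j : ℕ) = l then c
  else if (i : ℕ) = l + 1 ∧ (j : ℕ) = l + 1 then d
  else if i = j then 1 else 0

open scoped Matrix

namespace Matrix

theorem mul_det_eq_of_vecMul_castSucc_eq_zero {R : Type*} [CommRing R] {n : ℕ}
    (N : Matrix (Fin (n+1)) (Fin (n+1)) R) (x : Fin (n+1) → R)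
    (hx : ∀ j : Fin n, (x ᵥ* N) j.castSucc = 0) :
    x (Fin.last n) * N.det
      = (x ᵥ* N) (Fin.last n) * (N.submatrix Fin.castSucc Fin.castSucc).det := by
  rw [← smul_eq_mul, ← det_updateRow_sum, ← vecMul_eq_sum, det_succ_row _ (Fin.last n),
    Fin.sum_univ_castSucc]
  simp only [Fin.val_last, Fin.val_castSucc, updateRow_self, hx, mul_zero, zero_mul,
    Finset.sum_const_zero, zero_add, ← two_mul, pow_mul, even_two, Even.neg_pow, one_pow,
    one_mul, Fin.succAbove_last]
  congr 2
  ext i j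
  simp

end Matrix

theorem TU_succ {μ n : ℕ} (c : Fin (n+1) → Fin μ) (i : Fin n) :
    TU c i.succ = TU c i.castSucc * tU (c i.succ) := by
  have h : Finset.Iio i.succ = Finset.Iic i.castSucc := by
    ext k
    simp [Fin.le_castSucc_iff]
  rw [TU, Finset.Iic_eq_cons_Iio, Finset.prod_cons, h, TU, mul_comm]

section Aug

variable {μ l : ℕ} (A : Matrix (Fin (l+1)) (Fin (l+1)) (Lau μ)) (v : Fin (l+1) → Lau μ)

@[simp]
theorem aug_castSucc_castSucc (i j : Fin (l+1)) : aug A v i.castSucc j.castSucc = A i j := by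
  simp [aug, Fin.is_le]

@[simp]
theorem aug_last_castSucc (j : Fin (l+1)) : aug A v (Fin.last _) j.castSucc = v j := by
  simp [aug, Fin.is_le]

@[simp]
theorem aug_castSucc_last (i : Fin (l+1)) : aug A v i.castSucc (Fin.last _) = 0 := by
  simp [aug, Fin.is_le]

@[simp]
theorem aug_last_last : aug A v (Fin.last _) (Fin.last _) = 1 := by
  simp [aug]

end Aug

section Last2Block

variable {μ l : ℕ} (P : Matrix (Fin (l+2)) (Fin (l+2)) (Lau μ)) (b d : Lau μ)

@[simp]
theorem mul_last2Block_apply_castSucc (i : Fin (l+2)) (j : Fin (l+1)) :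
    (P * last2Block l 1 b 0 d) i j.castSucc = P i j.castSucc := by
  have hcol : ∀ k, last2Block l 1 b 0 d k j.castSucc = if k = j.castSucc then 1 else 0 := by
    intro k
    have := j.is_lt
    simp only [last2Block, Fin.val_castSucc, Fin.ext_iff]
    split_ifs <;> first | rfl | omega
  simp [Matrix.mul_apply, hcol]

@[simp]
theorem mul_last2Block_apply_last (i : Fin (l+2)) :
    (P * last2Block l 1 b 0 d) i (Fin.last _)
      = P i (Fin.last l).castSucc * b + P i (Fin.last _) * d := by
  rw [Matrix.mul_apply, Fin.sum_univ_castSucc, Fin.sum_univ_castSucc]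
  simp only [last2Block, Fin.val_castSucc, Fin.val_last]
  rw [Finset.sum_eq_zero fun k _ => by
    simp [k.is_lt.ne, (k.is_lt.trans (Nat.lt_succ_self l)).ne]]
  simp

end Last2Block

theorem BoundaryRel.sum_mul_apply {μ l : ℕ} {c : Fin (l+2) → Fin μ}
    {A : Matrix (Fin (l+1)) (Fin (l+1)) (Lau μ)} {v : Fin (l+1) → Lau μ}
    (hb : BoundaryRel c A v) (j : Fin (l+1)) :
    ∑ i : Fin (l+1), ((TU c i.castSucc : Lau μ) - 1) * A i j
      = ((TU c j.castSucc : Lau μ) - 1) - ((TU c (Fin.last (l+1)) : Lau μ) - 1) * v j := by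
  have h := hb j
  simp only [Matrix.sub_apply, Matrix.one_apply, mul_sub, mul_ite, mul_one, mul_zero,
    Finset.sum_sub_distrib, Finset.sum_ite_eq', Finset.mem_univ, if_true] at h
  linear_combination h

/-- the determinant identity for the positive stabilization. With
`t = t_{c_n}`, `M = [[A,0],[v,1]]` and `G` the identity except for the last `2×2`
diagonal block `[[1,t],[0,−t]]`, if `(A,v)` satisfies the boundary relation for `c` then
`(T^c_n − 1) · det(M·G − I_n) = (1 − T^c_{n−1} t²) · det(A − I_{n−1})`
(here `n = l + 2 ≥ 2`). -/
theorem stmt4 {μ l : ℕ} (c : Fin (l+2) → Fin μ)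
    (A : Matrix (Fin (l+1)) (Fin (l+1)) (Lau μ)) (v : Fin (l+1) → Lau μ)
    (hb : BoundaryRel c A v) :
    ((TU c (Fin.last (l+1)) : Lau μ) - 1) *
        (aug A v *
            last2Block l 1 (tU (c (Fin.last (l+1))) : Lau μ) 0
              (-(tU (c (Fin.last (l+1))) : Lau μ)) - 1).det
      = (1 - (TU c ((Fin.last l).castSucc) : Lau μ) * (tU (c (Fin.last (l+1))) : Lau μ) ^ 2) *
          (A - 1).det := by
  set t : Lau μ := (tU (c (Fin.last (l+1))) : Lau μ)
  set N := aug A v * last2Block l 1 t 0 (-t) - 1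
  set x : Fin (l+2) → Lau μ := fun i => (TU c i : Lau μ) - 1
  have hT : (TU c (Fin.last (l+1)) : Lau μ) = TU c (Fin.last l).castSucc * t := by
    rw [← Fin.succ_last, TU_succ, Units.val_mul, Fin.succ_last]
  have hsub : N.submatrix Fin.castSucc Fin.castSucc = A - 1 := by
    ext i j
    simp [N, Matrix.one_apply]
  have hrow (j : Fin (l+1)) : N (Fin.last _) j.castSucc = v j := by
    simp [N, Matrix.one_apply_ne (Fin.castSucc_lt_last j).ne']
  have hcol (i : Fin (l+1)) : N i.castSucc (Fin.last _) = A i (Fin.last l) * t := by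
    simp [N, Matrix.one_apply_ne (Fin.castSucc_lt_last i).ne]
  have hcorner : N (Fin.last _) (Fin.last _) = v (Fin.last l) * t - t - 1 := by
    simp [N]
    ring
  have hx (j : Fin (l+1)) : (x ᵥ* N) j.castSucc = 0 := by
    rw [Matrix.vecMul, dotProduct, Fin.sum_univ_castSucc]
    simp only [← Matrix.submatrix_apply N Fin.castSucc Fin.castSucc, hsub, hrow, x]
    rw [hb j]
    ring
  have hxN : (x ᵥ* N) (Fin.last _) = 1 - TU c (Fin.last l).castSucc * t ^ 2 := by
    rw [Matrix.vecMul, dotProduct, Fin.sum_univ_castSucc]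
    simp only [hcol, hcorner, x, ← mul_assoc, ← Finset.sum_mul]
    rw [hb.sum_mul_apply, hT]
    ring
  calc _ = x (Fin.last _) * N.det := rfl
    _ = _ := by rw [Matrix.mul_det_eq_of_vecMul_castSucc_eq_zero N x hx, hxN, hsub]
end
end

section
/- Let m ≥ 2, let i, j ∈ {1,…,μ} be colors (possibly equal) and set x = t_i, y = t_j in Λ_μ. Define the m×m matrices G⁺ and G⁻ over Λ_μ to be equal to the identity except in their upper-left 2×2 diagonal block, which equals [[x²y², 0],[1 − x², 1]] for G⁺ and [[x^{−2}y^{−2}, 0],[y^{−2}(1 − x^{−2}), 1]] for G⁻. Then for every m×m matrix B over Λ_μ: x^{−1}y^{−1}·det(B·G⁺ − I_m) + x·y·det(B·G⁻ − I_m) = (xy + x^{−1}y^{−1})·det(B − I_m). -/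
noncomputable section

open scoped BigOperators

/-- The `(k+2)×(k+2)` matrix equal to the identity except in its upper-left `2×2`
diagonal block, which is `[[a,b],[c,d]]`. -/
def first2Block {μ : ℕ} (k : ℕ) (a b c d : Lau μ) :
    Matrix (Fin (k+2)) (Fin (k+2)) (Lau μ) := fun p q =>
  if (p : ℕ) = 0 ∧ (q : ℕ) = 0 then a
  else if (p : ℕ) = 0 ∧ (q : ℕ) = 1 then b
  else if (p : ℕ) = 1 ∧ (q : ℕ) = 0 then c
  else if (p : ℕ) = 1 ∧ (q : ℕ) = 1 then d
  else if p = q then 1 else 0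


lemma mul_first2Block {μ k : ℕ} (B : Matrix (Fin (k+2)) (Fin (k+2)) (Lau μ)) (a c : Lau μ) :
    B * first2Block k a 0 c 1
      = B.updateCol 0 (fun p => B p 0 * a + B p 1 * c) := by
  ext p q
  rw [Matrix.mul_apply, Matrix.updateCol_apply]
  by_cases hq : q = 0
  · subst hq
    simp only [if_pos rfl]
    rw [Fin.sum_univ_succ, Fin.sum_univ_succ]
    have h1 : ((1 : Fin (k+2)) : ℕ) = 1 := rfl
    have h2 : (0 : Fin (k+1)).succ = (1 : Fin (k+2)) := rfl
    rw [h2]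
    have : ∀ r : Fin k, B p r.succ.succ * first2Block k a 0 c 1 r.succ.succ 0 = 0 := by
      intro r
      have : first2Block k a 0 c 1 r.succ.succ 0 = 0 := by
        simp [first2Block, Fin.ext_iff]
      rw [this, mul_zero]
    rw [Finset.sum_congr rfl (fun r _ => this r), Finset.sum_const_zero]
    have e1 : first2Block k a 0 c 1 0 0 = a := by simp [first2Block]
    have e2 : first2Block k a 0 c 1 1 0 = c := by simp [first2Block, h1]
    rw [e1, e2, add_zero]
    simp
  · rw [if_neg hq]
    rw [Finset.sum_eq_single q]
    · have : first2Block k a 0 c 1 q q = 1 := by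
        have hq0 : (q : ℕ) ≠ 0 := fun h => hq (Fin.ext h)
        simp only [first2Block]
        split_ifs with h1 h2 h3 h4 h5 <;>
          first | rfl | omega | exact absurd rfl h5
      rw [this, mul_one]
    · intro r _ hr
      have : first2Block k a 0 c 1 r q = 0 := by
        have hrq : (r : ℕ) ≠ (q : ℕ) := fun h => hr (Fin.ext h)
        have hq0 : (q : ℕ) ≠ 0 := fun h => hq (Fin.ext h)
        simp only [first2Block, Fin.ext_iff] at *
        split_ifs with h1 h2 h3 h4 h5 <;> first | rfl | omega
      rw [this, mul_zero]
    · simp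

lemma sub_one_updateCol {μ k : ℕ} (B : Matrix (Fin (k+2)) (Fin (k+2)) (Lau μ))
    (f : Fin (k+2) → Lau μ) :
    B.updateCol 0 f - 1
      = (B - 1).updateCol 0 (fun p => f p - (1 : Matrix (Fin (k+2)) (Fin (k+2)) (Lau μ)) p 0) := by
  ext p q
  by_cases h : q = 0 <;> simp [Matrix.updateCol_apply, h, Matrix.sub_apply]

lemma key_scalar {R : Type*} [CommRing R] (x xi y yi P Q e : R) (hx : x * xi = 1)
    (hy : y * yi = 1) :
    xi * yi * (P * (x^2*y^2) + Q * (1 - x^2) - e)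
      + x * y * (P * (xi^2*yi^2) + Q * (yi^2*(1-xi^2)) - e)
      = (x*y + xi*yi) * (P - e) := by
  linear_combination (P*(x*y*y*yi + xi*yi*y*yi) - Q*(xi*yi*y*yi + x*yi)) * hx
    + (P*(x*y + xi*yi) + Q*(x*yi - xi*yi)) * hy

/-- the determinant identity verifying Jiang's doubling axiom (R4).
With `x = t_i`, `y = t_j`, `G⁺` the identity except for the upper-left `2×2` block
`[[x²y², 0],[1 − x², 1]]` and `G⁻` the identity except for the upper-left `2×2`
block `[[x⁻²y⁻², 0],[y⁻²(1 − x⁻²), 1]]`, for EVERY `m×m` matrix `B` (`m = k+2 ≥ 2`):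
`x⁻¹y⁻¹ det(B·G⁺ − I) + x y det(B·G⁻ − I) = (x y + x⁻¹ y⁻¹) det(B − I)`. -/
theorem stmt9 {μ k : ℕ} (i j : Fin μ) (B : Matrix (Fin (k+2)) (Fin (k+2)) (Lau μ)) :
    (((tU i)⁻¹ : (Lau μ)ˣ) : Lau μ) * (((tU j)⁻¹ : (Lau μ)ˣ) : Lau μ) *
        (B * first2Block k ((tU i : Lau μ) ^ 2 * (tU j : Lau μ) ^ 2) 0
            (1 - (tU i : Lau μ) ^ 2) 1 - 1).det
      + (tU i : Lau μ) * (tU j : Lau μ) *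
        (B * first2Block k ((((tU i)⁻¹ : (Lau μ)ˣ) : Lau μ) ^ 2 *
              (((tU j)⁻¹ : (Lau μ)ˣ) : Lau μ) ^ 2) 0
            ((((tU j)⁻¹ : (Lau μ)ˣ) : Lau μ) ^ 2 *
              (1 - (((tU i)⁻¹ : (Lau μ)ˣ) : Lau μ) ^ 2)) 1 - 1).det
      = ((tU i : Lau μ) * (tU j : Lau μ)
          + (((tU i)⁻¹ : (Lau μ)ˣ) : Lau μ) * (((tU j)⁻¹ : (Lau μ)ˣ) : Lau μ)) *
          (B - 1).det := by

  set x : Lau μ := (tU i : Lau μ) with hxdef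
  set y : Lau μ := (tU j : Lau μ) with hydef
  set xi : Lau μ := (((tU i)⁻¹ : (Lau μ)ˣ) : Lau μ) with hxidef
  set yi : Lau μ := (((tU j)⁻¹ : (Lau μ)ˣ) : Lau μ) with hyidef
  have hx : x * xi = 1 := Units.mul_inv _
  have hy : y * yi = 1 := Units.mul_inv _
  set M := B - (1 : Matrix (Fin (k+2)) (Fin (k+2)) (Lau μ)) with hM
  set e : Fin (k+2) → Lau μ := fun p => (1 : Matrix (Fin (k+2)) (Fin (k+2)) (Lau μ)) p 0 with he
  set wP : Fin (k+2) → Lau μ := fun p => (B p 0 * (x^2*y^2) + B p 1 * (1 - x^2)) - e p with hwP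
  set wN : Fin (k+2) → Lau μ :=
    fun p => (B p 0 * (xi^2*yi^2) + B p 1 * (yi^2*(1-xi^2))) - e p with hwN
  have hP : B * first2Block k (x^2*y^2) 0 (1 - x^2) 1 - 1 = M.updateCol 0 wP := by
    rw [mul_first2Block, sub_one_updateCol]
  have hN : B * first2Block k (xi^2*yi^2) 0 (yi^2*(1-xi^2)) 1 - 1 = M.updateCol 0 wN := by
    rw [mul_first2Block, sub_one_updateCol]
  rw [hP, hN]
  have hsum : (xi * yi) • wP + (x * y) • wN = (x*y + xi*yi) • fun p => M p 0 := by
    funext p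
    have : M p 0 = B p 0 - e p := by simp [hM, Matrix.sub_apply, he]
    simp only [Pi.add_apply, Pi.smul_apply, smul_eq_mul, hwP, hwN, this]
    exact key_scalar x xi y yi (B p 0) (B p 1) (e p) hx hy
  calc xi * yi * (M.updateCol 0 wP).det + x * y * (M.updateCol 0 wN).det
      = (M.updateCol 0 ((xi * yi) • wP + (x * y) • wN)).det := by
        rw [Matrix.det_updateCol_add, Matrix.det_updateCol_smul,
          Matrix.det_updateCol_smul]
    _ = (x*y + xi*yi) * M.det := by
        rw [hsum, Matrix.det_updateCol_smul, Matrix.updateCol_eq_self]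
end
end
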